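/- arXiv:1706.06050 — 9 statements merged into one kernel-verified Lean document; each statement's English description precedes it below -/
import Mathlib

section
/- The Poisson log-likelihood l is twice differentiable, and for every α ∈ ℝ^M and every v ∈ ℝ^M the second derivative of l at α applied to (v, v) equals −Σ_{i=1}^N d_i · exp(−(Lα)_i) · ((Lv)_i)². In particular this quantity is ≤ 0 for all v. -/
/-!
Each summand of the log-likelihood is a scalar function `t ↦ P log d - t P - d e^{-t} - log P!`
composed with the linear form `α ↦ (Lα)_i`. The Hessian of `g ∘ φ` for a linear form `φ` is
`g''(φ α) (φ v)²`, and here `g''(t) = -d e^{-t} < 0`.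
-/

/-- The Poisson log-likelihood for the Raman lidar inverse problem. -/
noncomputable def lidarLogLik {N M : ℕ} (L : Matrix (Fin N) (Fin M) ℝ)
    (d : Fin N → ℝ) (P : Fin N → ℕ) (α : Fin M → ℝ) : ℝ :=
  ∑ i, ((P i : ℝ) * Real.log (d i) - (L.mulVec α i) * (P i : ℝ)
    - d i * Real.exp (-(L.mulVec α i)) - Real.log (Nat.factorial (P i)))

open Real

theorem iteratedFDeriv_comp_clm_apply {𝕜 E F : Type*} [NontriviallyNormedField 𝕜]
    [NormedAddCommGroup E] [NormedSpace 𝕜 E] [NormedAddCommGroup F] [NormedSpace 𝕜 F]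
    {n : ℕ} {g : 𝕜 → F} (hg : ContDiff 𝕜 n g) (φ : E →L[𝕜] 𝕜) (x : E) (m : Fin n → E) :
    iteratedFDeriv 𝕜 n (g ∘ φ) x m = (∏ i, φ (m i)) • iteratedDeriv n g (φ x) := by
  rw [φ.iteratedFDeriv_comp_right hg x le_rfl,
    ContinuousMultilinearMap.compContinuousLinearMap_apply,
    iteratedFDeriv_apply_eq_iteratedDeriv_mul_prod]

namespace Matrix

variable {m n : Type*} [Fintype n]

noncomputable def mulVecCoordCLM (L : Matrix m n ℝ) (i : m) : (n → ℝ) →L[ℝ] ℝ :=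
  ContinuousLinearMap.proj i ∘L (Matrix.mulVecLin L).toContinuousLinearMap

@[simp]
theorem mulVecCoordCLM_apply (L : Matrix m n ℝ) (i : m) (v : n → ℝ) :
    mulVecCoordCLM L i v = L.mulVec v i := rfl

end Matrix

noncomputable def poissonLogPmf (p : ℕ) (c t : ℝ) : ℝ :=
  p * log c - t * p - c * exp (-t) - log (Nat.factorial p)

theorem contDiff_poissonLogPmf (p : ℕ) (c : ℝ) {n : WithTop ℕ∞} :
    ContDiff ℝ n (poissonLogPmf p c) := by
  unfold poissonLogPmf
  fun_prop

theorem hasDerivAt_poissonLogPmf (p : ℕ) (c t : ℝ) :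
    HasDerivAt (poissonLogPmf p c) (c * exp (-t) - p) t := by
  have hexp : HasDerivAt (fun t => c * exp (-t)) (-(c * exp (-t))) t := by
    simpa using ((hasDerivAt_neg t).exp).const_mul c
  have := ((((hasDerivAt_id t).mul_const (p : ℝ)).const_sub (p * log c)).sub hexp).sub_const
    (log (Nat.factorial p))
  exact this.congr_deriv (by ring)

theorem iteratedDeriv_two_poissonLogPmf (p : ℕ) (c t : ℝ) :
    iteratedDeriv 2 (poissonLogPmf p c) t = -(c * exp (-t)) := by
  have hderiv : deriv (poissonLogPmf p c) = fun t => c * exp (-t) - p :=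
    funext fun t => (hasDerivAt_poissonLogPmf p c t).deriv
  rw [iteratedDeriv_succ, iteratedDeriv_one, hderiv]
  exact (((hasDerivAt_neg t).exp).const_mul c |>.sub_const _).deriv.trans (by ring)

theorem lidarLogLik_eq_sum_comp {N M : ℕ} (L : Matrix (Fin N) (Fin M) ℝ) (d : Fin N → ℝ)
    (P : Fin N → ℕ) :
    lidarLogLik L d P = fun α => ∑ i, (poissonLogPmf (P i) (d i) ∘ L.mulVecCoordCLM i) α :=
  rfl

theorem stmt_1_general {N M : ℕ}
    (L : Matrix (Fin N) (Fin M) ℝ) (d : Fin N → ℝ) (hd : ∀ i, 0 < d i)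
    (P : Fin N → ℕ) :
    ContDiff ℝ 2 (lidarLogLik L d P) ∧
    ∀ (α v : Fin M → ℝ),
      iteratedFDeriv ℝ 2 (lidarLogLik L d P) α ![v, v] =
        -∑ i, d i * Real.exp (-(L.mulVec α i)) * (L.mulVec v i) ^ 2 ∧
      iteratedFDeriv ℝ 2 (lidarLogLik L d P) α ![v, v] ≤ 0 := by
  have hterm (i : Fin N) : ContDiff ℝ 2 (poissonLogPmf (P i) (d i) ∘ L.mulVecCoordCLM i) :=
    (contDiff_poissonLogPmf _ _).comp (L.mulVecCoordCLM i).contDiff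
  have hsecond (α v : Fin M → ℝ) : iteratedFDeriv ℝ 2 (lidarLogLik L d P) α ![v, v] =
      -∑ i, d i * exp (-(L.mulVec α i)) * (L.mulVec v i) ^ 2 := by
    rw [lidarLogLik_eq_sum_comp, iteratedFDeriv_sum fun i _ => hterm i,
      Finset.sum_apply, sum_apply, ← Finset.sum_neg_distrib]
    refine Finset.sum_congr rfl fun i _ => ?_
    rw [iteratedFDeriv_comp_clm_apply (contDiff_poissonLogPmf _ _), iteratedDeriv_two_poissonLogPmf]
    simp only [Fin.prod_univ_two, Matrix.cons_val_zero, Matrix.cons_val_one,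
      Matrix.mulVecCoordCLM_apply, smul_eq_mul]
    ring
  refine ⟨by simpa only [lidarLogLik_eq_sum_comp] using ContDiff.sum fun i _ => hterm i,
    fun α v => ⟨hsecond α v, ?_⟩⟩
  rw [hsecond, neg_nonpos]
  exact Finset.sum_nonneg fun i _ => by have := (hd i).le; positivity

/-- The Poisson log-likelihood is twice differentiable and its second derivative at `α`
applied to `(v, v)` equals `−Σ_i d_i exp(−(Lα)_i) ((Lv)_i)²`, which is `≤ 0`. -/
theorem stmt_1 {N M : ℕ} (hN : 0 < N) (hM : 0 < M)
    (L : Matrix (Fin N) (Fin M) ℝ) (d : Fin N → ℝ) (hd : ∀ i, 0 < d i)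
    (P : Fin N → ℕ) :
    ContDiff ℝ 2 (lidarLogLik L d P) ∧
    ∀ (α v : Fin M → ℝ),
      iteratedFDeriv ℝ 2 (lidarLogLik L d P) α ![v, v] =
        -∑ i, d i * Real.exp (-(L.mulVec α i)) * (L.mulVec v i) ^ 2 ∧
      iteratedFDeriv ℝ 2 (lidarLogLik L d P) α ![v, v] ≤ 0 :=
  stmt_1_general L d hd P
end

section
/- If N ≥ M and the linear map α ↦ Lα is injective, then the Poisson log-likelihood l is strictly concave on ℝ^M. -/
/-- If `N ≥ M` and the linear map `α ↦ Lα` is injective, then the Poisson log-likelihood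
is strictly concave on `ℝ^M`. -/
theorem stmt_3 {N M : ℕ} (hN : 0 < N) (hM : 0 < M) (hNM : M ≤ N)
    (L : Matrix (Fin N) (Fin M) ℝ) (hL : Function.Injective L.mulVec)
    (d : Fin N → ℝ) (hd : ∀ i, 0 < d i) (P : Fin N → ℕ) :
    StrictConcaveOn ℝ Set.univ (lidarLogLik L d P) := by
  constructor
  · exact convex_univ
  intro x _ y _ hxy a b ha hb hab
  set u := L.mulVec x with hu
  set v := L.mulVec y with hv
  have huv : u ≠ v := fun h => hxy (hL h)
  obtain ⟨i0, hi0⟩ := Function.ne_iff.mp huv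
  have hmix : L.mulVec (a • x + b • y) = a • u + b • v := by
    rw [Matrix.mulVec_add, Matrix.mulVec_smul, Matrix.mulVec_smul]
  simp only [smul_eq_mul, lidarLogLik, hmix]
  rw [Finset.mul_sum, Finset.mul_sum, ← Finset.sum_add_distrib]
  apply Finset.sum_lt_sum
  · intro i _
    have hexp : Real.exp (-(a * u i + b * v i))
        ≤ a * Real.exp (-u i) + b * Real.exp (-v i) := by
      rw [show -(a * u i + b * v i) = a * (-u i) + b * (-v i) from by ring]
      exact convexOn_exp.2 (Set.mem_univ _) (Set.mem_univ _) ha.le hb.le hab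
    have hdi := (hd i).le
    simp only [Pi.add_apply, Pi.smul_apply, smul_eq_mul]
    simp only [hu, hv] at hexp ⊢
    have hb' : b = 1 - a := by linarith
    subst hb'
    nlinarith [mul_le_mul_of_nonneg_left hexp hdi]
  · refine ⟨i0, Finset.mem_univ _, ?_⟩
    have hexp : Real.exp (-(a * u i0 + b * v i0))
        < a * Real.exp (-u i0) + b * Real.exp (-v i0) := by
      rw [show -(a * u i0 + b * v i0) = a * (-u i0) + b * (-v i0) from by ring]
      exact strictConvexOn_exp.2 (Set.mem_univ _) (Set.mem_univ _)
        (fun h => hi0 (neg_injective h)) ha hb hab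
    have hdi := hd i0
    simp only [Pi.add_apply, Pi.smul_apply, smul_eq_mul]
    simp only [hu, hv] at hexp ⊢
    have hb' : b = 1 - a := by linarith
    subst hb'
    nlinarith [mul_lt_mul_of_pos_left hexp hdi]
end

section
/- Assume all entries of L are nonnegative and (LᵀP)_j > 0 for every j = 1,…,M. Then the Poisson log-likelihood l is coercive towards −∞ on the nonnegative orthant: l(α) → −∞ as ‖α‖ → ∞ with α ranging over the nonnegative orthant; equivalently, for every real c there exists R > 0 such that every α in the nonnegative orthant with ‖α‖ > R satisfies l(α) < c. -/
/-- If all entries of `L` are nonnegative and `(LᵀP)_j > 0` for every `j`, then the Poisson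
log-likelihood tends to `−∞` as `‖α‖ → ∞` over the nonnegative orthant: for every real `c`
there is `R > 0` such that every nonnegative `α` with `‖α‖ > R` satisfies `l(α) < c`. -/
theorem stmt_6 {N M : ℕ} (hN : 0 < N) (hM : 0 < M)
    (L : Matrix (Fin N) (Fin M) ℝ) (d : Fin N → ℝ) (hd : ∀ i, 0 < d i)
    (P : Fin N → ℕ)
    (hL : ∀ i j, 0 ≤ L i j)
    (hLP : ∀ j : Fin M, 0 < ∑ i, L i j * (P i : ℝ)) :
    ∀ c : ℝ, ∃ R > (0 : ℝ), ∀ α : Fin M → ℝ, (∀ j, 0 ≤ α j) → R < ‖α‖ →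
      lidarLogLik L d P α < c := by
  intro c
  have hMne : (Finset.univ : Finset (Fin M)).Nonempty := by haveI : Nonempty (Fin M) := ⟨⟨0, hM⟩⟩; exact Finset.univ_nonempty
  set T : Fin M → ℝ := fun j => ∑ i, L i j * (P i : ℝ) with hT
  set t : ℝ := Finset.univ.inf' hMne T with ht
  have htpos : 0 < t := by
    rw [ht, Finset.lt_inf'_iff]
    intro j _; exact hLP j
  set C : ℝ := ∑ i, (P i : ℝ) * Real.log (d i) with hC
  refine ⟨max 1 ((C - c) / t + 1), lt_of_lt_of_le one_pos (le_max_left _ _), ?_⟩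
  intro α hα hR
  -- Pick the index achieving the max
  obtain ⟨j₀, _, hj₀⟩ := Finset.exists_max_image Finset.univ α hMne
  have hnorm_le : ‖α‖ ≤ α j₀ := by
    apply pi_norm_le_iff_of_nonneg (hα j₀) |>.2
    intro j
    rw [Real.norm_eq_abs, abs_of_nonneg (hα j)]
    exact hj₀ j (Finset.mem_univ j)
  -- key bound: lidarLogLik ≤ C - t * α j₀
  have hsum : ∑ i, L.mulVec α i * (P i : ℝ) = ∑ j, α j * T j := by
    simp only [Matrix.mulVec, dotProduct, Finset.sum_mul, Finset.mul_sum, hT]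
    rw [Finset.sum_comm]
    congr 1; ext j; congr 1; ext i; ring
  have hterm : t * α j₀ ≤ ∑ j, α j * T j := by
    calc t * α j₀ ≤ α j₀ * T j₀ := by
          rw [mul_comm]
          exact mul_le_mul_of_nonneg_left (Finset.inf'_le T (Finset.mem_univ j₀)) (hα j₀)
      _ ≤ ∑ j, α j * T j := Finset.single_le_sum (fun j _ =>
          mul_nonneg (hα j) (le_of_lt (hLP j))) (Finset.mem_univ j₀)
  have hbound : lidarLogLik L d P α ≤ C - t * α j₀ := by
    have h1 : lidarLogLik L d P α ≤ ∑ i, ((P i : ℝ) * Real.log (d i) - L.mulVec α i * (P i : ℝ)) := by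
      unfold lidarLogLik
      apply Finset.sum_le_sum
      intro i _
      have h2 : 0 ≤ d i * Real.exp (-(L.mulVec α i)) :=
        mul_nonneg (hd i).le (Real.exp_nonneg _)
      have h3 : 0 ≤ Real.log (Nat.factorial (P i)) := by
        apply Real.log_nonneg
        exact_mod_cast (P i).factorial_pos
      linarith
    rw [Finset.sum_sub_distrib] at h1
    rw [hsum] at h1
    calc lidarLogLik L d P α ≤ C - ∑ j, α j * T j := h1
      _ ≤ C - t * α j₀ := by linarith [hterm]
  have hj₀big : (C - c) / t + 1 ≤ α j₀ :=
    le_trans (le_max_right 1 _) (le_trans hR.le hnorm_le)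
  have : t * ((C - c) / t + 1) ≤ t * α j₀ :=
    mul_le_mul_of_nonneg_left hj₀big htpos.le
  rw [mul_add, mul_one, mul_div_cancel₀ _ htpos.ne'] at this
  linarith
end

section
/- Assume N ≥ M, the linear map α ↦ Lα is injective, all entries of L are nonnegative, and (LᵀP)_j > 0 for every j = 1,…,M. Then the Poisson log-likelihood l attains its maximum over the nonnegative orthant, and the maximizer is unique: there exists exactly one α̃ in the nonnegative orthant such that l(α̃) ≥ l(α) for all α in the nonnegative orthant. -/
lemma midexp_le (x y : ℝ) :
    Real.exp (-((x + y) / 2)) ≤ (Real.exp (-x) + Real.exp (-y)) / 2 := by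
  have h := convexOn_exp.2 (Set.mem_univ (-x)) (Set.mem_univ (-y))
    (by norm_num : (0:ℝ) ≤ 1/2) (by norm_num : (0:ℝ) ≤ 1/2) (by norm_num)
  simp only [smul_eq_mul] at h
  have e : (1/2 : ℝ) * (-x) + (1/2 : ℝ) * (-y) = -((x + y)/2) := by ring
  rw [e] at h
  linarith

lemma midexp_lt {x y : ℝ} (hxy : x ≠ y) :
    Real.exp (-((x + y) / 2)) < (Real.exp (-x) + Real.exp (-y)) / 2 := by
  have h := strictConvexOn_exp.2 (Set.mem_univ (-x)) (Set.mem_univ (-y))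
    (by simpa using fun h => hxy (neg_injective h))
    (by norm_num : (0:ℝ) < 1/2) (by norm_num : (0:ℝ) < 1/2) (by norm_num)
  simp only [smul_eq_mul] at h
  have e : (1/2 : ℝ) * (-x) + (1/2 : ℝ) * (-y) = -((x + y)/2) := by ring
  rw [e] at h
  linarith

lemma term_le (p ld lf : ℝ) {c : ℝ} (hc : 0 < c) (x y : ℝ) :
    ((ld - x * p - c * Real.exp (-x) - lf) + (ld - y * p - c * Real.exp (-y) - lf)) / 2
      ≤ ld - ((x + y) / 2) * p - c * Real.exp (-((x + y) / 2)) - lf := by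
  have h := mul_le_mul_of_nonneg_left (midexp_le x y) hc.le
  linarith

lemma term_lt (p ld lf : ℝ) {c : ℝ} (hc : 0 < c) {x y : ℝ} (hxy : x ≠ y) :
    ((ld - x * p - c * Real.exp (-x) - lf) + (ld - y * p - c * Real.exp (-y) - lf)) / 2
      < ld - ((x + y) / 2) * p - c * Real.exp (-((x + y) / 2)) - lf := by
  have h := mul_lt_mul_of_pos_left (midexp_lt hxy) hc
  linarith

/-- If `N ≥ M`, `α ↦ Lα` is injective, `L` has nonnegative entries, and `(LᵀP)_j > 0` for
every `j`, then the Poisson log-likelihood attains its maximum over the nonnegative orthant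
at exactly one point. -/
theorem stmt_7 {N M : ℕ} (hN : 0 < N) (hM : 0 < M) (hNM : M ≤ N)
    (L : Matrix (Fin N) (Fin M) ℝ) (hLinj : Function.Injective L.mulVec)
    (d : Fin N → ℝ) (hd : ∀ i, 0 < d i) (P : Fin N → ℕ)
    (hL : ∀ i j, 0 ≤ L i j)
    (hLP : ∀ j : Fin M, 0 < ∑ i, L i j * (P i : ℝ)) :
    ∃! a : Fin M → ℝ, (∀ j, 0 ≤ a j) ∧
      ∀ α : Fin M → ℝ, (∀ j, 0 ≤ α j) → lidarLogLik L d P α ≤ lidarLogLik L d P a := by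
  classical
  haveI : Nonempty (Fin N) := ⟨⟨0, hN⟩⟩
  haveI : Nonempty (Fin M) := ⟨⟨0, hM⟩⟩
  set f : (Fin M → ℝ) → ℝ := lidarLogLik L d P with hfdef
  -- continuity
  have hmv_cont : ∀ i, Continuous fun α : Fin M → ℝ => L.mulVec α i := by
    intro i
    simp only [Matrix.mulVec, dotProduct]
    exact continuous_finset_sum _ fun j _ => continuous_const.mul (continuous_apply j)
  have hcont : Continuous f := by
    rw [hfdef]
    unfold lidarLogLik
    exact continuous_finset_sum _ fun i _ =>
      (((continuous_const.sub ((hmv_cont i).mul continuous_const)).sub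
        (continuous_const.mul (Real.continuous_exp.comp (hmv_cont i).neg))).sub
        continuous_const)
  -- strict midpoint concavity
  have key : ∀ a b : Fin M → ℝ, a ≠ b →
      (f a + f b) / 2 < f (fun j => (a j + b j) / 2) := by
    intro a b hab
    have hxy : L.mulVec a ≠ L.mulVec b := fun h => hab (hLinj h)
    obtain ⟨i0, hi0⟩ := Function.ne_iff.mp hxy
    have hmv : ∀ i, L.mulVec (fun j => (a j + b j) / 2) i
        = (L.mulVec a i + L.mulVec b i) / 2 := by
      intro i
      simp only [Matrix.mulVec, dotProduct]
      rw [← Finset.sum_add_distrib, Finset.sum_div]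
      exact Finset.sum_congr rfl fun j _ => by ring
    have hsum : (f a + f b) / 2 =
        ∑ i, (((P i : ℝ) * Real.log (d i) - (L.mulVec a i) * (P i : ℝ)
            - d i * Real.exp (-(L.mulVec a i)) - Real.log (Nat.factorial (P i)))
          + ((P i : ℝ) * Real.log (d i) - (L.mulVec b i) * (P i : ℝ)
            - d i * Real.exp (-(L.mulVec b i)) - Real.log (Nat.factorial (P i)))) / 2 := by
      rw [hfdef]
      unfold lidarLogLik
      rw [← Finset.sum_add_distrib, Finset.sum_div]
    rw [hsum, hfdef]
    unfold lidarLogLik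
    simp only [hmv]
    exact Finset.sum_lt_sum
      (fun i _ => term_le _ _ _ (hd i) _ _)
      ⟨i0, Finset.mem_univ i0, term_lt _ _ _ (hd i0) hi0⟩
  -- decomposition of f
  set C0 : ℝ := ∑ i, ((P i : ℝ) * Real.log (d i) - Real.log (Nat.factorial (P i)))
    with hC0
  have hfexp : ∀ β, f β = C0 - (∑ i, L.mulVec β i * (P i : ℝ))
      - ∑ i, d i * Real.exp (-(L.mulVec β i)) := by
    intro β
    rw [hfdef, hC0]
    unfold lidarLogLik
    rw [← Finset.sum_sub_distrib, ← Finset.sum_sub_distrib]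
    exact Finset.sum_congr rfl fun i _ => by ring
  set D : ℝ := ∑ i, d i with hD
  have hDpos : 0 < D := Finset.sum_pos (fun i _ => hd i) Finset.univ_nonempty
  have hf0 : f 0 = C0 - D := by
    rw [hfexp 0]
    simp [Matrix.mulVec_zero, hD]
  -- the coercivity constant
  have hMne : (Finset.univ : Finset (Fin M)).Nonempty := Finset.univ_nonempty
  set s : Fin M → ℝ := fun j => ∑ i, L i j * (P i : ℝ) with hs
  set c : ℝ := Finset.univ.inf' hMne s with hc
  have hcpos : 0 < c := (Finset.lt_inf'_iff hMne).mpr fun j _ => hLP j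
  have hcle : ∀ j, c ≤ s j := fun j => Finset.inf'_le _ (Finset.mem_univ j)
  set R : ℝ := D / c + 1 with hR
  have hRpos : 0 < R := by positivity
  -- bound outside the box
  have hbound : ∀ α : Fin M → ℝ, (∀ j, 0 ≤ α j) → (∃ j, R < α j) → f α ≤ f 0 := by
    rintro α hα ⟨j0, hj0⟩
    have hswap : ∑ i, L.mulVec α i * (P i : ℝ) = ∑ j, s j * α j := by
      simp only [Matrix.mulVec, dotProduct, hs, Finset.sum_mul]
      rw [Finset.sum_comm]
      exact Finset.sum_congr rfl fun j _ => Finset.sum_congr rfl fun i _ => by ring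
    have hsnn : ∀ j, 0 ≤ s j := fun j => (hcpos.trans_le (hcle j)).le
    have h2 : s j0 * α j0 ≤ ∑ j, s j * α j :=
      Finset.single_le_sum (fun j _ => mul_nonneg (hsnn j) (hα j)) (Finset.mem_univ j0)
    have h3 : c * R ≤ s j0 * α j0 :=
      mul_le_mul (hcle j0) hj0.le hRpos.le (hsnn j0)
    have hcR : c * R = D + c := by
      rw [hR]; field_simp
    have hS2 : 0 ≤ ∑ i, d i * Real.exp (-(L.mulVec α i)) :=
      Finset.sum_nonneg fun i _ => mul_nonneg (hd i).le (Real.exp_pos _).le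
    rw [hfexp α, hf0, hswap]
    have : D + c ≤ ∑ j, s j * α j := by linarith
    linarith
  -- existence on the compact box
  set K : Set (Fin M → ℝ) := Set.Icc 0 (fun _ => R) with hK
  have h0K : (0 : Fin M → ℝ) ∈ K := by
    constructor
    · exact le_refl _
    · intro j; exact hRpos.le
  have hKc : IsCompact K := isCompact_Icc
  obtain ⟨a, haK, hamax⟩ := hKc.exists_isMaxOn ⟨0, h0K⟩ hcont.continuousOn
  have ha0 : ∀ j, 0 ≤ a j := fun j => haK.1 j
  have hglob : ∀ α : Fin M → ℝ, (∀ j, 0 ≤ α j) → f α ≤ f a := by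
    intro α hα
    by_cases hcase : ∀ j, α j ≤ R
    · exact hamax ⟨fun j => hα j, fun j => hcase j⟩
    · push_neg at hcase
      obtain ⟨j, hj⟩ := hcase
      exact (hbound α hα ⟨j, hj⟩).trans (hamax h0K)
  refine ⟨a, ⟨ha0, hglob⟩, ?_⟩
  rintro b ⟨hb0, hbmax⟩
  by_contra hne
  have hfeq : f a = f b := le_antisymm (hbmax a ha0) (hglob b hb0)
  have hm0 : ∀ j, 0 ≤ (fun j => (b j + a j) / 2) j := by
    intro j
    have := hb0 j; have := ha0 j
    dsimp only
    linarith
  have hk := key b a hne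
  have := hbmax (fun j => (b j + a j) / 2) hm0
  linarith [hk, this, hfeq]
end

section
/- Assume (LᵀP)_j > 0 for every j = 1,…,M. If α̃ in the nonnegative orthant is a global maximizer of the Poisson log-likelihood l over the nonnegative orthant, then α̃ satisfies the fixed-point equation α̃_j = α̃_j · (Lᵀ(d ⊙ exp(−Lα̃)))_j / (LᵀP)_j for every j = 1,…,M, i.e. α̃ is a fixed point of the operator T defined by T(α)_j = α_j · (Lᵀ(d ⊙ exp(−Lα)))_j / (LᵀP)_j. -/
open Function Matrix

theorem IsMaxOn.hasDerivAt_update_eq_zero {ι : Type*} [DecidableEq ι] {F : (ι → ℝ) → ℝ}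
    {a : ι → ℝ} (ha : ∀ k, 0 ≤ a k) (hmax : IsMaxOn F {α | ∀ k, 0 ≤ α k} a) {j : ι}
    (hj : 0 < a j) {D : ℝ} (hD : HasDerivAt (fun t => F (update a j t)) D (a j)) : D = 0 := by
  refine IsLocalMax.hasDerivAt_eq_zero ?_ hD
  filter_upwards [lt_mem_nhds hj] with t ht
  rw [update_eq_self]
  refine hmax fun k => ?_
  rcases eq_or_ne k j with rfl | hk
  · simpa using ht.le
  · simpa [hk] using ha k

theorem Matrix.hasDerivAt_mulVec_update {m n : Type*} [Fintype n] [DecidableEq n]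
    (L : Matrix m n ℝ) (a : n → ℝ) (j : n) (i : m) (t : ℝ) :
    HasDerivAt (fun s => (L *ᵥ update a j s) i) (L i j) t := by
  have hcoord := hasDerivAt_pi.mp (hasDerivAt_update a j t)
  have := HasDerivAt.fun_sum (u := Finset.univ) fun k _ => (hcoord k).const_mul (L i k)
  simpa [mulVec, dotProduct, Pi.single_apply] using this

theorem hasDerivAt_lidarLogLik_update {N M : ℕ} (L : Matrix (Fin N) (Fin M) ℝ)
    (d : Fin N → ℝ) (P : Fin N → ℕ) (α : Fin M → ℝ) (j : Fin M) :
    HasDerivAt (fun t => lidarLogLik L d P (update α j t))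
      (∑ i, L i j * (d i * Real.exp (-(L *ᵥ α) i)) - ∑ i, L i j * (P i : ℝ)) (α j) := by
  have hterm : ∀ i, HasDerivAt (fun t => (P i : ℝ) * Real.log (d i) - (L *ᵥ update α j t) i * P i
      - d i * Real.exp (-(L *ᵥ update α j t) i) - Real.log (P i).factorial)
      (L i j * (d i * Real.exp (-(L *ᵥ α) i)) - L i j * P i) (α j) := by
    intro i
    have hx := L.hasDerivAt_mulVec_update α j i (α j)
    refine (((hx.mul_const (P i : ℝ)).const_sub ((P i : ℝ) * Real.log (d i))).fun_sub
      (hx.fun_neg.exp.const_mul (d i))).sub_const (Real.log (P i).factorial) |>.congr_deriv ?_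
    rw [update_eq_self]
    ring
  have hsum := HasDerivAt.fun_sum (u := Finset.univ) fun i _ => hterm i
  rwa [Finset.sum_sub_distrib] at hsum

theorem stmt_9_general {N M : ℕ}
    (L : Matrix (Fin N) (Fin M) ℝ) (d : Fin N → ℝ)
    (P : Fin N → ℕ)
    (hLP : ∀ j : Fin M, 0 < ∑ i, L i j * (P i : ℝ))
    (a : Fin M → ℝ) (ha : ∀ j, 0 ≤ a j)
    (hmax : ∀ α : Fin M → ℝ, (∀ j, 0 ≤ α j) →
      lidarLogLik L d P α ≤ lidarLogLik L d P a) :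
    ∀ j : Fin M,
      a j = a j * (∑ i, L i j * (d i * Real.exp (-(L.mulVec a i)))) /
        (∑ i, L i j * (P i : ℝ)) := by
  intro j
  rcases (ha j).eq_or_lt with hzero | hpos
  · simp [← hzero]
  have hcrit := IsMaxOn.hasDerivAt_update_eq_zero ha (fun α hα => hmax α hα) hpos
    (hasDerivAt_lidarLogLik_update L d P a j)
  rw [sub_eq_zero.mp hcrit, mul_div_assoc, div_self (hLP j).ne', mul_one]

/-- If `(LᵀP)_j > 0` for every `j` and `α̃` in the nonnegative orthant maximizes the Poisson
log-likelihood over the nonnegative orthant, then `α̃` is a fixed point of the operator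
`T(α)_j = α_j (Lᵀ(d ⊙ exp(−Lα)))_j / (LᵀP)_j`. -/
theorem stmt_9 {N M : ℕ} (hN : 0 < N) (hM : 0 < M)
    (L : Matrix (Fin N) (Fin M) ℝ) (d : Fin N → ℝ) (hd : ∀ i, 0 < d i)
    (P : Fin N → ℕ)
    (hLP : ∀ j : Fin M, 0 < ∑ i, L i j * (P i : ℝ))
    (a : Fin M → ℝ) (ha : ∀ j, 0 ≤ a j)
    (hmax : ∀ α : Fin M → ℝ, (∀ j, 0 ≤ α j) →
      lidarLogLik L d P α ≤ lidarLogLik L d P a) :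
    ∀ j : Fin M,
      a j = a j * (∑ i, L i j * (d i * Real.exp (-(L.mulVec a i)))) /
        (∑ i, L i j * (P i : ℝ)) :=
  stmt_9_general L d P hLP a ha hmax
end

section
/- Assume N ≥ M, the linear map α ↦ Lα is injective, and (LᵀP)_j > 0 for every j. If α ∈ ℝ^M has all components strictly positive and (∇l)(α) = 0, then α is the unique global maximizer of the Poisson log-likelihood l over ℝ^M (and hence over the nonnegative orthant): l(β) < l(α) for all β ≠ α. -/
/-- Assume `N ≥ M`, `α ↦ Lα` injective, and `(LᵀP)_j > 0` for every `j`. If `α` has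
strictly positive components and the gradient
`(∇l)_j(α) = Σ_i L_{ij}( d_i exp(−(Lα)_i) − P_i )` vanishes at `α`, then `α` is the unique
global maximizer of `l` over `ℝ^M`: `l(β) < l(α)` for all `β ≠ α`. -/
theorem stmt_13 {N M : ℕ} (hN : 0 < N) (hM : 0 < M) (hNM : M ≤ N)
    (L : Matrix (Fin N) (Fin M) ℝ) (hLinj : Function.Injective L.mulVec)
    (d : Fin N → ℝ) (hd : ∀ i, 0 < d i) (P : Fin N → ℕ)
    (hLP : ∀ j : Fin M, 0 < ∑ i, L i j * (P i : ℝ))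
    (α : Fin M → ℝ) (hpos : ∀ j, 0 < α j)
    (hgrad : ∀ j : Fin M,
      ∑ i, L i j * (d i * Real.exp (-(L.mulVec α i)) - (P i : ℝ)) = 0) :
    ∀ β : Fin M → ℝ, β ≠ α → lidarLogLik L d P β < lidarLogLik L d P α := by
  intro β hβ
  set f : Fin N → ℝ := L.mulVec α with hf
  set g : Fin N → ℝ := L.mulVec β with hg
  have hc : ∀ i, 0 < d i * Real.exp (-(f i)) := fun i => mul_pos (hd i) (Real.exp_pos _)
  have hsub : ∀ i, g i - f i = ∑ j, L i j * (β j - α j) := by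
    intro i
    simp [hf, hg, Matrix.mulVec, dotProduct, mul_sub, Finset.sum_sub_distrib]
  have key : ∑ i, (g i - f i) * (d i * Real.exp (-(f i)) - (P i : ℝ)) = 0 := by
    calc ∑ i, (g i - f i) * (d i * Real.exp (-(f i)) - (P i : ℝ))
        = ∑ i, ∑ j, (β j - α j) *
            (L i j * (d i * Real.exp (-(f i)) - (P i : ℝ))) := by
          refine Finset.sum_congr rfl fun i _ => ?_
          rw [hsub i, Finset.sum_mul]
          exact Finset.sum_congr rfl fun j _ => by ring
      _ = ∑ j, (β j - α j) *
            ∑ i, L i j * (d i * Real.exp (-(f i)) - (P i : ℝ)) := by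
          rw [Finset.sum_comm]
          simp [Finset.mul_sum]
      _ = 0 := by simp [hgrad]
  have hexp : ∀ i, (d i * Real.exp (-(f i))) * Real.exp (-(g i - f i))
      = d i * Real.exp (-(g i)) := by
    intro i
    rw [mul_assoc, ← Real.exp_add]
    ring_nf
  have hdiff : lidarLogLik L d P β - lidarLogLik L d P α
      = ∑ i, (d i * Real.exp (-(f i))) *
          (1 - (g i - f i) - Real.exp (-(g i - f i))) := by
    calc lidarLogLik L d P β - lidarLogLik L d P α
        = ∑ i, (-(g i - f i) * (P i : ℝ) + d i * Real.exp (-(f i))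
            - d i * Real.exp (-(g i))) := by
          unfold lidarLogLik
          rw [← Finset.sum_sub_distrib]
          exact Finset.sum_congr rfl fun i _ => by ring
      _ = ∑ i, ((d i * Real.exp (-(f i))) *
              (1 - (g i - f i) - Real.exp (-(g i - f i)))
            + (g i - f i) * (d i * Real.exp (-(f i)) - (P i : ℝ))) := by
          refine Finset.sum_congr rfl fun i _ => ?_
          linear_combination hexp i
      _ = (∑ i, (d i * Real.exp (-(f i))) *
              (1 - (g i - f i) - Real.exp (-(g i - f i))))
            + ∑ i, (g i - f i) * (d i * Real.exp (-(f i)) - (P i : ℝ)) :=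
          Finset.sum_add_distrib
      _ = _ := by rw [key, add_zero]
  have hne : ∃ i, g i ≠ f i := by
    by_contra h
    push_neg at h
    exact hβ (hLinj (funext h))
  obtain ⟨i0, hi0⟩ := hne
  have hsum : ∑ i, (d i * Real.exp (-(f i))) *
      (1 - (g i - f i) - Real.exp (-(g i - f i))) < ∑ _i : Fin N, (0 : ℝ) := by
    refine Finset.sum_lt_sum (fun i _ => ?_) ⟨i0, Finset.mem_univ i0, ?_⟩
    · have h := Real.add_one_le_exp (-(g i - f i))
      nlinarith [hc i]
    · have ht : -(g i0 - f i0) ≠ 0 := by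
        intro h; exact hi0 (by linarith [neg_eq_zero.mp h, sub_eq_zero.mp (neg_eq_zero.mp h)])
      have h := Real.add_one_lt_exp ht
      nlinarith [hc i0]
  simp only [Finset.sum_const, smul_zero] at hsum
  linarith [hdiff ▸ hsum]
end

section
/- Assume all entries of L are nonnegative and all P_i ≥ 0, and let γ > 0. Then the penalized objective S(α) = l(α) − γ‖α‖₂² satisfies S(α) → −∞ as ‖α‖ → ∞ over the nonnegative orthant, and S attains a unique global maximum on the nonnegative orthant: there exists exactly one α̃ with α̃_j ≥ 0 for all j such that S(α̃) ≥ S(α) for all α in the nonnegative orthant. -/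
/-- The penalized objective `S(α) = l(α) − γ‖α‖₂²`. -/
noncomputable def lidarPenalized {N M : ℕ} (L : Matrix (Fin N) (Fin M) ℝ)
    (d : Fin N → ℝ) (P : Fin N → ℕ) (γ : ℝ) (α : Fin M → ℝ) : ℝ :=
  lidarLogLik L d P α - γ * ∑ j, (α j) ^ 2

open Finset

lemma mulVec_mid' {N M : ℕ} (L : Matrix (Fin N) (Fin M) ℝ) (a b : Fin M → ℝ) (i : Fin N) :
    L.mulVec (fun j => (a j + b j)/2) i = (L.mulVec a i + L.mulVec b i)/2 := by
  simp only [Matrix.mulVec, dotProduct]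
  rw [← Finset.sum_add_distrib, Finset.sum_div]
  exact Finset.sum_congr rfl (fun j _ => by ring)

lemma lik_concave' {N M : ℕ} (L : Matrix (Fin N) (Fin M) ℝ) (d : Fin N → ℝ)
    (hd : ∀ i, 0 < d i) (P : Fin N → ℕ) (a b : Fin M → ℝ) :
    (lidarLogLik L d P a + lidarLogLik L d P b)/2
      ≤ lidarLogLik L d P (fun j => (a j + b j)/2) := by
  unfold lidarLogLik
  rw [← Finset.sum_add_distrib, Finset.sum_div]
  refine Finset.sum_le_sum (fun i _ => ?_)
  rw [mulVec_mid']
  set u := L.mulVec a i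
  set v := L.mulVec b i
  have hconv : Real.exp ((1/2 : ℝ) • (-u) + (1/2 : ℝ) • (-v))
      ≤ (1/2) * Real.exp (-u) + (1/2) * Real.exp (-v) :=
    convexOn_exp.2 (Set.mem_univ (-u)) (Set.mem_univ (-v)) (by norm_num) (by norm_num) (by norm_num)
  simp only [smul_eq_mul] at hconv
  have h2 : -((u + v)/2) = (1/2) * (-u) + (1/2) * (-v) := by ring
  rw [h2]
  nlinarith [(hd i).le, Real.exp_pos (-u), Real.exp_pos (-v)]

lemma pen_mid' {N M : ℕ} (L : Matrix (Fin N) (Fin M) ℝ) (d : Fin N → ℝ)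
    (hd : ∀ i, 0 < d i) (P : Fin N → ℕ) (γ : ℝ) (a b : Fin M → ℝ) :
    (lidarPenalized L d P γ a + lidarPenalized L d P γ b)/2
      + γ * ∑ j, ((a j - b j)/2)^2
      ≤ lidarPenalized L d P γ (fun j => (a j + b j)/2) := by
  have hl := lik_concave' L d hd P a b
  have hsq : (∑ j, ((a j + b j)/2)^2) + ∑ j, ((a j - b j)/2)^2
      = ((∑ j, (a j)^2) + ∑ j, (b j)^2)/2 := by
    rw [← Finset.sum_add_distrib, ← Finset.sum_add_distrib, Finset.sum_div]
    exact Finset.sum_congr rfl (fun j _ => by ring)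
  unfold lidarPenalized
  simp only
  have h3 : γ * ∑ j, ((a j + b j)/2)^2
      = γ * (((∑ j, (a j)^2) + ∑ j, (b j)^2)/2) - γ * ∑ j, ((a j - b j)/2)^2 := by
    linear_combination γ * hsq
  linarith

lemma log_lik_upper' {N M : ℕ} (L : Matrix (Fin N) (Fin M) ℝ) (d : Fin N → ℝ)
    (hd : ∀ i, 0 < d i) (P : Fin N → ℕ) (hL : ∀ i j, 0 ≤ L i j)
    (α : Fin M → ℝ) (hα : ∀ j, 0 ≤ α j) :
    lidarLogLik L d P α ≤ ∑ i, ((P i : ℝ) * Real.log (d i) - Real.log (Nat.factorial (P i))) := by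
  unfold lidarLogLik
  refine Finset.sum_le_sum (fun i _ => ?_)
  have hx : 0 ≤ L.mulVec α i := by
    simp only [Matrix.mulVec, dotProduct]
    exact Finset.sum_nonneg (fun j _ => mul_nonneg (hL i j) (hα j))
  have := Real.exp_pos (-(L.mulVec α i))
  nlinarith [mul_nonneg hx (Nat.cast_nonneg (P i)), mul_pos (hd i) this]

lemma normsq_le' {M : ℕ} (α : Fin M → ℝ) : ‖α‖^2 ≤ ∑ j, (α j)^2 := by
  have hs : 0 ≤ ∑ j, (α j)^2 := Finset.sum_nonneg (fun j _ => sq_nonneg _)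
  have h : ‖α‖ ≤ Real.sqrt (∑ j, (α j)^2) := by
    refine (pi_norm_le_iff_of_nonneg (Real.sqrt_nonneg _)).2 (fun j => ?_)
    rw [Real.norm_eq_abs, ← Real.sqrt_sq_eq_abs]
    exact Real.sqrt_le_sqrt
      (Finset.single_le_sum (f := fun j => (α j)^2) (fun j _ => sq_nonneg _) (Finset.mem_univ j))
  calc ‖α‖^2 ≤ (Real.sqrt (∑ j, (α j)^2))^2 := by
        exact pow_le_pow_left₀ (norm_nonneg _) h 2
    _ = ∑ j, (α j)^2 := Real.sq_sqrt hs

lemma cont' {N M : ℕ} (L : Matrix (Fin N) (Fin M) ℝ) (d : Fin N → ℝ)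
    (P : Fin N → ℕ) (γ : ℝ) : Continuous (lidarPenalized L d P γ) := by
  unfold lidarPenalized lidarLogLik Matrix.mulVec dotProduct
  fun_prop

/-- If `L` has nonnegative entries and `γ > 0`, then `S(α) = l(α) − γ‖α‖₂²` tends to `−∞`
as `‖α‖ → ∞` over the nonnegative orthant, and `S` attains a unique global maximum on the
nonnegative orthant. -/
theorem stmt_16 {N M : ℕ} (hN : 0 < N) (hM : 0 < M)
    (L : Matrix (Fin N) (Fin M) ℝ) (d : Fin N → ℝ) (hd : ∀ i, 0 < d i)
    (P : Fin N → ℕ) (hL : ∀ i j, 0 ≤ L i j) (hP : ∀ i, 0 ≤ (P i : ℝ))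
    (γ : ℝ) (hγ : 0 < γ) :
    (∀ c : ℝ, ∃ R > (0 : ℝ), ∀ α : Fin M → ℝ, (∀ j, 0 ≤ α j) → R < ‖α‖ →
      lidarPenalized L d P γ α < c) ∧
    (∃! a : Fin M → ℝ, (∀ j, 0 ≤ a j) ∧
      ∀ α : Fin M → ℝ, (∀ j, 0 ≤ α j) →
        lidarPenalized L d P γ α ≤ lidarPenalized L d P γ a) := by
  set C : ℝ := ∑ i, ((P i : ℝ) * Real.log (d i) - Real.log (Nat.factorial (P i))) with hC
  -- main coercivity estimate
  have key : ∀ c : ℝ, ∃ R > (0 : ℝ), ∀ α : Fin M → ℝ, (∀ j, 0 ≤ α j) → R < ‖α‖ →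
      lidarPenalized L d P γ α < c := by
    intro c
    refine ⟨max 1 (Real.sqrt ((C - c)/γ) + 1), lt_of_lt_of_le one_pos (le_max_left _ _), ?_⟩
    intro α hα hR
    have h1 : lidarPenalized L d P γ α ≤ C - γ * ∑ j, (α j)^2 := by
      have := log_lik_upper' L d hd P hL α hα
      unfold lidarPenalized
      linarith
    have h2 : ‖α‖^2 ≤ ∑ j, (α j)^2 := normsq_le' α
    have hRα : Real.sqrt ((C - c)/γ) + 1 < ‖α‖ := lt_of_le_of_lt (le_max_right _ _) hR
    have hs : Real.sqrt ((C - c)/γ) < ‖α‖ := by linarith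
    have h3 : (C - c)/γ < ‖α‖^2 := by
      calc (C - c)/γ ≤ Real.sqrt ((C - c)/γ)^2 := by
            rcases le_or_gt ((C - c)/γ) 0 with h | h
            · exact le_trans h (sq_nonneg _)
            · rw [Real.sq_sqrt h.le]
        _ < ‖α‖^2 := by
            have h0 : (0:ℝ) ≤ Real.sqrt ((C - c)/γ) := Real.sqrt_nonneg _
            nlinarith
    have h4 : C - c < γ * ‖α‖^2 := by
      rw [div_lt_iff₀ hγ] at h3; linarith
    nlinarith [mul_le_mul_of_nonneg_left h2 hγ.le]
  refine ⟨key, ?_⟩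
  -- existence of a maximizer
  obtain ⟨R, hR0, hRc⟩ := key (lidarPenalized L d P γ 0)
  have horth : IsClosed {α : Fin M → ℝ | ∀ j, 0 ≤ α j} := by
    have : {α : Fin M → ℝ | ∀ j, 0 ≤ α j} = ⋂ j, {α : Fin M → ℝ | 0 ≤ α j} := by
      ext x; simp [Set.mem_iInter]
    rw [this]
    exact isClosed_iInter (fun j => isClosed_le continuous_const (continuous_apply j))
  have hK : IsCompact ({α : Fin M → ℝ | ∀ j, 0 ≤ α j} ∩ Metric.closedBall 0 R) :=
    (isCompact_closedBall (0 : Fin M → ℝ) R).inter_left horth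
  have h0K : (0 : Fin M → ℝ) ∈ {α : Fin M → ℝ | ∀ j, 0 ≤ α j} ∩ Metric.closedBall 0 R := by
    constructor
    · intro j; exact le_refl 0
    · simp [hR0.le]
  obtain ⟨a, haK, hamax⟩ := hK.exists_isMaxOn ⟨0, h0K⟩ ((cont' L d P γ).continuousOn)
  have haorth : ∀ j, 0 ≤ a j := haK.1
  have hglobal : ∀ α : Fin M → ℝ, (∀ j, 0 ≤ α j) →
      lidarPenalized L d P γ α ≤ lidarPenalized L d P γ a := by
    intro α hα
    rcases le_or_gt ‖α‖ R with h | h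
    · exact hamax ⟨hα, by simpa [Metric.mem_closedBall, dist_zero_right] using h⟩
    · exact le_of_lt (lt_of_lt_of_le (hRc α hα h) (hamax h0K))
  refine ⟨a, ⟨haorth, hglobal⟩, ?_⟩
  -- uniqueness
  rintro b ⟨hborth, hbmax⟩
  by_contra hne
  have hmorth : ∀ j, 0 ≤ (fun j => (b j + a j)/2) j := by
    intro j; have := hborth j; have := haorth j; simp; linarith
  have hmid := pen_mid' L d hd P γ b a
  have hdiff : 0 < ∑ j, ((b j - a j)/2)^2 := by
    have hex : ∃ j, b j ≠ a j := by
      by_contra h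
      push_neg at h
      exact hne (funext h)
    obtain ⟨j, hj⟩ := hex
    refine Finset.sum_pos' (fun k _ => sq_nonneg _) ⟨j, Finset.mem_univ j, ?_⟩
    have : b j - a j ≠ 0 := sub_ne_zero.2 hj
    positivity
  have hab : lidarPenalized L d P γ a = lidarPenalized L d P γ b :=
    le_antisymm (hbmax a haorth) (hglobal b hborth)
  have hm := hglobal (fun j => (b j + a j)/2) hmorth
  nlinarith [mul_pos hγ hdiff]
end

section
/- Let γ > 0. If α̃ in the nonnegative orthant is a global maximizer of the penalized objective S over the nonnegative orthant, then α̃ satisfies the fixed-point equation α̃_j = α̃_j · (Lᵀ(d ⊙ exp(−Lα̃)))_j / ( (LᵀP)_j + 2γ·α̃_j ) for every j = 1,…,M such that (LᵀP)_j + 2γ·α̃_j > 0; equivalently, α̃_j · ( (LᵀP)_j + 2γ·α̃_j ) = α̃_j · (Lᵀ(d ⊙ exp(−Lα̃)))_j for every j. -/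
/-!
A coordinate with `α̃_j > 0` lies in the interior of the orthant along the direction `e_j`, so the
one-variable function `t ↦ S(α̃ + t e_j)` has a local maximum at `0` and its derivative
`(Lᵀ(d ⊙ exp(−Lα̃)))_j − (LᵀP)_j − 2γ α̃_j` vanishes. Where `α̃_j = 0` both sides of the
multiplied equation are zero.
-/

open Matrix Real

lemma hasDerivAt_add_smul_apply {ι : Type*} (a v : ι → ℝ) (j : ι) (t : ℝ) :
    HasDerivAt (fun s : ℝ ↦ (a + s • v) j) (v j) t := by
  simpa using ((hasDerivAt_id t).smul_const (v j)).const_add (a j)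

lemma IsMaxOn.hasDerivAt_single_eq_zero {ι : Type*} [DecidableEq ι] {f : (ι → ℝ) → ℝ}
    {a : ι → ℝ} (hmax : IsMaxOn f (Set.Ici 0) a) (ha : 0 ≤ a)
    {j : ι} (hj : 0 < a j) {f' : ℝ}
    (hf : HasDerivAt (fun t : ℝ ↦ f (a + t • Pi.single j 1)) f' 0) :
    f' = 0 := by
  refine IsLocalMax.hasDerivAt_eq_zero ?_ hf
  filter_upwards [Ioi_mem_nhds (neg_lt_zero.mpr hj)] with t ht
  simp only [zero_smul, add_zero]
  refine hmax fun k ↦ ?_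
  rcases eq_or_ne k j with rfl | hk
  · simp only [Pi.zero_apply, Pi.add_apply, Pi.smul_apply, Pi.single_eq_same, smul_eq_mul,
      mul_one]
    linarith [Set.mem_Ioi.mp ht]
  · simpa [Pi.single_eq_of_ne hk] using ha k

lemma hasDerivAt_sum_sq_add_smul {ι : Type*} [Fintype ι] (a v : ι → ℝ) (t : ℝ) :
    HasDerivAt (fun s : ℝ ↦ ∑ j, (a + s • v) j ^ 2) (∑ j, 2 * (a + t • v) j * v j) t :=
  HasDerivAt.fun_sum fun j _ ↦ by
    simpa using (hasDerivAt_add_smul_apply a v j t).fun_pow 2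

section

variable {N M : ℕ} (L : Matrix (Fin N) (Fin M) ℝ) (d : Fin N → ℝ) (P : Fin N → ℕ)

lemma hasDerivAt_lidarLogLik_add_smul (a v : Fin M → ℝ) (t : ℝ) :
    HasDerivAt (fun s : ℝ ↦ lidarLogLik L d P (a + s • v))
      (∑ i, (L *ᵥ v) i * (d i * exp (-(L *ᵥ (a + t • v)) i) - P i)) t := by
  simp only [lidarLogLik, mulVec_add, mulVec_smul]
  refine HasDerivAt.fun_sum fun i _ ↦ ?_
  have hlin := hasDerivAt_add_smul_apply (L *ᵥ a) (L *ᵥ v) i t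
  exact ((((hlin.mul_const (P i : ℝ)).const_sub ((P i : ℝ) * log (d i))).sub
    (hlin.fun_neg.exp.const_mul (d i))).sub_const (log (P i).factorial)).congr_deriv (by ring)

lemma lidarPenalized_stationary_of_pos {γ : ℝ} {a : Fin M → ℝ} (ha : ∀ j, 0 ≤ a j)
    (hmax : ∀ α : Fin M → ℝ, (∀ j, 0 ≤ α j) →
      lidarPenalized L d P γ α ≤ lidarPenalized L d P γ a)
    {j : Fin M} (hj : 0 < a j) :
    ∑ i, L i j * (P i : ℝ) + 2 * γ * a j = ∑ i, L i j * (d i * exp (-(L *ᵥ a) i)) := by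
  have hderiv := (hasDerivAt_lidarLogLik_add_smul L d P a (Pi.single j 1) 0).sub
    ((hasDerivAt_sum_sq_add_smul a (Pi.single j 1) 0).const_mul γ)
  have hzero := (isMaxOn_iff.mpr hmax).hasDerivAt_single_eq_zero ha hj hderiv
  simp only [mulVec_single, MulOpposite.op_one, Pi.smul_apply, col_apply, one_smul, zero_smul,
    add_zero, mul_sub, Finset.sum_sub_distrib, Pi.add_apply, Pi.zero_apply, Pi.single_apply,
    mul_ite, mul_one, mul_zero, Finset.sum_ite_eq', Finset.mem_univ, ↓reduceIte] at hzero
  linarith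

end

theorem stmt_17_general {N M : ℕ}
    (L : Matrix (Fin N) (Fin M) ℝ) (d : Fin N → ℝ)
    (P : Fin N → ℕ) (γ : ℝ)
    (a : Fin M → ℝ) (ha : ∀ j, 0 ≤ a j)
    (hmax : ∀ α : Fin M → ℝ, (∀ j, 0 ≤ α j) →
      lidarPenalized L d P γ α ≤ lidarPenalized L d P γ a) :
    (∀ j : Fin M, 0 < (∑ i, L i j * (P i : ℝ)) + 2 * γ * a j →
      a j = a j * (∑ i, L i j * (d i * Real.exp (-(L.mulVec a i)))) /
        ((∑ i, L i j * (P i : ℝ)) + 2 * γ * a j)) ∧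
    (∀ j : Fin M,
      a j * ((∑ i, L i j * (P i : ℝ)) + 2 * γ * a j) =
        a j * (∑ i, L i j * (d i * Real.exp (-(L.mulVec a i))))) := by
  have hfixed (j : Fin M) : a j * (∑ i, L i j * (P i : ℝ) + 2 * γ * a j) =
      a j * ∑ i, L i j * (d i * exp (-(L *ᵥ a) i)) := by
    rcases (ha j).eq_or_lt with h | h
    · simp [← h]
    · rw [lidarPenalized_stationary_of_pos L d P ha hmax h]
  exact ⟨fun j hpos ↦ (eq_div_iff hpos.ne').mpr (hfixed j), hfixed⟩

/-- Let `γ > 0`. If `α̃` in the nonnegative orthant is a global maximizer of the penalized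
objective `S` over the nonnegative orthant, then it satisfies the fixed-point equation
`α̃_j = α̃_j (Lᵀ(d ⊙ exp(−Lα̃)))_j / ((LᵀP)_j + 2γ α̃_j)` for every `j` with
`(LᵀP)_j + 2γ α̃_j > 0`; equivalently
`α̃_j ((LᵀP)_j + 2γ α̃_j) = α̃_j (Lᵀ(d ⊙ exp(−Lα̃)))_j` for every `j`. -/
theorem stmt_17 {N M : ℕ} (hN : 0 < N) (hM : 0 < M)
    (L : Matrix (Fin N) (Fin M) ℝ) (d : Fin N → ℝ) (hd : ∀ i, 0 < d i)
    (P : Fin N → ℕ) (γ : ℝ) (hγ : 0 < γ)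
    (a : Fin M → ℝ) (ha : ∀ j, 0 ≤ a j)
    (hmax : ∀ α : Fin M → ℝ, (∀ j, 0 ≤ α j) →
      lidarPenalized L d P γ α ≤ lidarPenalized L d P γ a) :
    (∀ j : Fin M, 0 < (∑ i, L i j * (P i : ℝ)) + 2 * γ * a j →
      a j = a j * (∑ i, L i j * (d i * Real.exp (-(L.mulVec a i)))) /
        ((∑ i, L i j * (P i : ℝ)) + 2 * γ * a j)) ∧
    (∀ j : Fin M,
      a j * ((∑ i, L i j * (P i : ℝ)) + 2 * γ * a j) =
        a j * (∑ i, L i j * (d i * Real.exp (-(L.mulVec a i))))) :=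
  stmt_17_general L d P γ a ha hmax
end

section
/- A point α̃ in the nonnegative orthant is a global maximizer of the penalized objective S(α) = l(α) − γ‖α‖₂² (with γ > 0) over the nonnegative orthant if and only if it satisfies the Karush–Kuhn–Tucker conditions: α̃_j · ( (∇l)_j(α̃) − 2γ·α̃_j ) = 0 for every j = 1,…,M, and (∇l)_j(α̃) − 2γ·α̃_j ≤ 0 for every j with α̃_j = 0, where (∇l)_j(α) = Σ_{i=1}^N L_{ij}( d_i·exp(−(Lα)_i) − P_i ). -/
/-- The `j`-th component of the gradient of the Poisson log-likelihood. -/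
noncomputable def lidarGrad {N M : ℕ} (L : Matrix (Fin N) (Fin M) ℝ)
    (d : Fin N → ℝ) (P : Fin N → ℕ) (α : Fin M → ℝ) (j : Fin M) : ℝ :=
  ∑ i, L i j * (d i * Real.exp (-(L.mulVec α i)) - (P i : ℝ))

open Real Finset Matrix Function

/-- The log-probability of `k` counts under a Poisson law of mean `d * exp (-s)`. -/
noncomputable def poissonLogLik (d : ℝ) (k : ℕ) (s : ℝ) : ℝ :=
  k * log d - s * k - d * exp (-s) - log k.factorial

lemma hasDerivAt_poissonLogLik (d : ℝ) (k : ℕ) (s : ℝ) :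
    HasDerivAt (poissonLogLik d k) (d * exp (-s) - k) s := by
  have h := ((((hasDerivAt_id' s).mul_const (k : ℝ)).const_sub (k * log d)).sub
    ((hasDerivAt_neg' s).exp.const_mul d)).sub_const (log k.factorial)
  exact h.congr_deriv (by ring)

lemma poissonLogLik_sub_le {d : ℝ} (hd : 0 ≤ d) (k : ℕ) (s t : ℝ) :
    poissonLogLik d k t - poissonLogLik d k s ≤ (d * exp (-s) - k) * (t - s) := by
  have hexp : exp (-s) * (s - t + 1) ≤ exp (-t) := by
    calc exp (-s) * (s - t + 1) ≤ exp (-s) * exp (s - t) :=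
          mul_le_mul_of_nonneg_left (add_one_le_exp _) (exp_pos _).le
      _ = exp (-t) := by rw [← exp_add]; ring_nf
  unfold poissonLogLik
  nlinarith [mul_le_mul_of_nonneg_left hexp hd]

lemma hasDerivAt_update_apply {ι : Type*} [DecidableEq ι] (a : ι → ℝ) (j k : ι) (t : ℝ) :
    HasDerivAt (fun s => update a j s k) ((Pi.single j 1 : ι → ℝ) k) t :=
  hasDerivAt_pi.1 (hasDerivAt_update a j t) k

lemma hasDerivAt_dotProduct_update {ι : Type*} [Fintype ι] [DecidableEq ι] (v a : ι → ℝ) (j : ι)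
    (t : ℝ) : HasDerivAt (fun s => v ⬝ᵥ update a j s) (v j) t := by
  have h := HasDerivAt.fun_sum fun k (_ : k ∈ univ) =>
    (hasDerivAt_update_apply a j k t).const_mul (v k)
  simpa [dotProduct, Pi.single_apply] using h

lemma hasDerivAt_sum_sq_update {ι : Type*} [Fintype ι] [DecidableEq ι] (a : ι → ℝ) (j : ι) :
    HasDerivAt (fun s => ∑ k, update a j s k ^ 2) (2 * a j) (a j) := by
  have h := HasDerivAt.fun_sum fun k (_ : k ∈ univ) =>
    (hasDerivAt_update_apply a j k (a j)).pow 2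
  simpa [Pi.single_apply] using h

lemma IsMaxOn.hasDerivWithinAt_mul_sub_nonpos {f : ℝ → ℝ} {s : Set ℝ} {x f' t : ℝ}
    (h : IsMaxOn f s x) (hs : Convex ℝ s) (hf : HasDerivWithinAt f f' s x) (hx : x ∈ s)
    (ht : t ∈ s) : f' * (t - x) ≤ 0 := by
  have hy : t - x ∈ posTangentConeAt s x :=
    mem_posTangentConeAt_of_segment_subset (by simpa using hs.segment_subset hx ht)
  simpa [mul_comm] using (h.localize).hasFDerivWithinAt_nonpos hf.hasFDerivWithinAt hy

lemma forall_mul_sub_nonpos_iff {g x : ℝ} (hx : 0 ≤ x) :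
    (∀ t, 0 ≤ t → g * (t - x) ≤ 0) ↔ x * g = 0 ∧ (x = 0 → g ≤ 0) := by
  constructor
  · intro h
    have h0 := h 0 le_rfl
    have h2 := h (2 * x) (by positivity)
    refine ⟨by nlinarith, fun hx0 => ?_⟩
    simpa [hx0] using h 1 zero_le_one
  · rintro ⟨hslack, hsign⟩ t ht
    rcases hx.eq_or_lt with hx0 | hpos
    · rw [← hx0, sub_zero]
      exact mul_nonpos_of_nonpos_of_nonneg (hsign hx0.symm) ht
    · rw [(mul_eq_zero.1 hslack).resolve_left hpos.ne', zero_mul]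

section Lidar

variable {N M : ℕ} (L : Matrix (Fin N) (Fin M) ℝ) (d : Fin N → ℝ) (P : Fin N → ℕ) (γ : ℝ)

noncomputable def lidarPenalizedGrad (a : Fin M → ℝ) (j : Fin M) : ℝ :=
  lidarGrad L d P a j - 2 * γ * a j

lemma lidarLogLik_eq_sum (α : Fin M → ℝ) :
    lidarLogLik L d P α = ∑ i, poissonLogLik (d i) (P i) ((L *ᵥ α) i) :=
  rfl

lemma lidarGrad_eq_vecMul (a : Fin M → ℝ) :
    lidarGrad L d P a = (fun i => d i * exp (-(L *ᵥ a) i) - P i) ᵥ* L := by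
  ext j
  simp only [lidarGrad, vecMul, dotProduct, mul_comm]

variable {d}

lemma lidarLogLik_sub_le (hd : ∀ i, 0 ≤ d i) (a α : Fin M → ℝ) :
    lidarLogLik L d P α - lidarLogLik L d P a ≤ lidarGrad L d P a ⬝ᵥ (α - a) := by
  set w : Fin N → ℝ := fun i => d i * exp (-(L *ᵥ a) i) - P i
  calc lidarLogLik L d P α - lidarLogLik L d P a
      = ∑ i, (poissonLogLik (d i) (P i) ((L *ᵥ α) i)
          - poissonLogLik (d i) (P i) ((L *ᵥ a) i)) := by
        rw [lidarLogLik_eq_sum, lidarLogLik_eq_sum, sum_sub_distrib]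
    _ ≤ ∑ i, w i * ((L *ᵥ α) i - (L *ᵥ a) i) :=
        sum_le_sum fun i _ => poissonLogLik_sub_le (hd i) _ _ _
    _ = lidarGrad L d P a ⬝ᵥ (α - a) := by
        rw [lidarGrad_eq_vecMul, ← dotProduct_mulVec, mulVec_sub]
        rfl

lemma lidarPenalized_sub_le (hd : ∀ i, 0 ≤ d i) {γ : ℝ} (hγ : 0 ≤ γ) (a α : Fin M → ℝ) :
    lidarPenalized L d P γ α - lidarPenalized L d P γ a
      ≤ lidarPenalizedGrad L d P γ a ⬝ᵥ (α - a) := by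
  have hl := lidarLogLik_sub_le L P hd a α
  have hq : ∑ j, 2 * a j * (α j - a j) ≤ ∑ j, α j ^ 2 - ∑ j, a j ^ 2 := by
    rw [← sum_sub_distrib]
    gcongr with j
    nlinarith [sq_nonneg (α j - a j)]
  have hgrad : lidarPenalizedGrad L d P γ a ⬝ᵥ (α - a)
      = lidarGrad L d P a ⬝ᵥ (α - a) - γ * ∑ j, 2 * a j * (α j - a j) := by
    simp only [dotProduct, lidarPenalizedGrad, mul_sum, ← sum_sub_distrib, Pi.sub_apply]
    exact sum_congr rfl fun j _ => by ring
  unfold lidarPenalized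
  linarith [mul_le_mul_of_nonneg_left hq hγ]

lemma hasDerivAt_lidarPenalized_update (a : Fin M → ℝ) (j : Fin M) :
    HasDerivAt (fun t => lidarPenalized L d P γ (update a j t))
      (lidarPenalizedGrad L d P γ a j) (a j) := by
  have hl :
      HasDerivAt (fun t => lidarLogLik L d P (update a j t)) (lidarGrad L d P a j) (a j) := by
    have h := HasDerivAt.fun_sum fun i (_ : i ∈ univ) =>
      (hasDerivAt_poissonLogLik (d i) (P i) _).comp (a j)
        (hasDerivAt_dotProduct_update (L i) a j (a j))
    simpa [lidarLogLik_eq_sum, lidarGrad, mulVec, mul_comm] using h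
  exact (hl.sub ((hasDerivAt_sum_sq_update a j).const_mul γ)).congr_deriv (by
    simp only [lidarPenalizedGrad]; ring)

end Lidar

theorem stmt_18_general {N M : ℕ}
    (L : Matrix (Fin N) (Fin M) ℝ) (d : Fin N → ℝ) (hd : ∀ i, 0 < d i)
    (P : Fin N → ℕ) (γ : ℝ) (hγ : 0 < γ)
    (a : Fin M → ℝ) (ha : ∀ j, 0 ≤ a j) :
    (∀ α : Fin M → ℝ, (∀ j, 0 ≤ α j) →
        lidarPenalized L d P γ α ≤ lidarPenalized L d P γ a) ↔
      ((∀ j, a j * (lidarGrad L d P a j - 2 * γ * a j) = 0) ∧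
       (∀ j, a j = 0 → lidarGrad L d P a j - 2 * γ * a j ≤ 0)) := by
  rw [← forall_and, ← forall_congr' fun j =>
    forall_mul_sub_nonpos_iff (g := lidarGrad L d P a j - 2 * γ * a j) (ha j)]
  constructor
  · intro hmax j t ht
    have hray : IsMaxOn (fun s => lidarPenalized L d P γ (update a j s)) (Set.Ici 0) (a j) := by
      intro s hs
      simpa using hmax _ (le_update_iff.2 ⟨hs, fun k _ => ha k⟩)
    exact hray.hasDerivWithinAt_mul_sub_nonpos (convex_Ici 0)
      (hasDerivAt_lidarPenalized_update L P γ a j).hasDerivWithinAt (ha j) ht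
  · intro hvar α hα
    have hlin := lidarPenalized_sub_le L P (fun i => (hd i).le) hγ.le a α
    have hnonpos : lidarPenalizedGrad L d P γ a ⬝ᵥ (α - a) ≤ 0 :=
      sum_nonpos fun j _ => hvar j (α j) (hα j)
    linarith

/-- A point `α̃` of the nonnegative orthant is a global maximizer of the penalized objective
`S(α) = l(α) − γ‖α‖₂²` (with `γ > 0`) over the nonnegative orthant if and only if it
satisfies the KKT conditions: `α̃_j ((∇l)_j(α̃) − 2γ α̃_j) = 0` for all `j`, and
`(∇l)_j(α̃) − 2γ α̃_j ≤ 0` whenever `α̃_j = 0`. -/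
theorem stmt_18 {N M : ℕ} (hN : 0 < N) (hM : 0 < M)
    (L : Matrix (Fin N) (Fin M) ℝ) (d : Fin N → ℝ) (hd : ∀ i, 0 < d i)
    (P : Fin N → ℕ) (γ : ℝ) (hγ : 0 < γ)
    (a : Fin M → ℝ) (ha : ∀ j, 0 ≤ a j) :
    (∀ α : Fin M → ℝ, (∀ j, 0 ≤ α j) →
        lidarPenalized L d P γ α ≤ lidarPenalized L d P γ a) ↔
      ((∀ j, a j * (lidarGrad L d P a j - 2 * γ * a j) = 0) ∧
       (∀ j, a j = 0 → lidarGrad L d P a j - 2 * γ * a j ≤ 0)) :=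
  stmt_18_general L d hd P γ hγ a ha
end
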